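/- arXiv:1905.05930 — 3 statements merged into one kernel-verified Lean document; each statement's English description precedes it below -/
import Mathlib

section
/- The 27 three-qutrit product states |0⟩|η_s⟩|ξ_t⟩, |η_s⟩|2⟩|ξ_t⟩, |2⟩|ξ_s⟩|η_t⟩, |η_s⟩|ξ_t⟩|0⟩, |ξ_s⟩|0⟩|η_t⟩, |ξ_s⟩|η_t⟩|2⟩ for s,t ∈ {+,−}, together with |k⟩|k⟩|k⟩ for k ∈ {0,1,2}, form an orthonormal basis of ℂ³ ⊗ ℂ³ ⊗ ℂ³. -/
noncomputable section

abbrev V3 : Type := EuclideanSpace ℂ (Fin 3)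
abbrev V333 : Type := EuclideanSpace ℂ (Fin 3 × Fin 3 × Fin 3)

def e3 (i : Fin 3) : V3 := EuclideanSpace.single i 1
def s2 : ℂ := Real.sqrt 2
def etaP : V3 := s2⁻¹ • (e3 0 + e3 1)
def etaM : V3 := s2⁻¹ • (e3 0 - e3 1)
def xiP : V3 := s2⁻¹ • (e3 1 + e3 2)
def xiM : V3 := s2⁻¹ • (e3 1 - e3 2)

/-- The tensor product `a ⊗ b ⊗ c ∈ (ℂ³)^⊗3`. -/
def tp3 (a b c : V3) : V333 := WithLp.toLp 2 (fun p : Fin 3 × Fin 3 × Fin 3 => a p.1 * b p.2.1 * c p.2.2)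

/-- The basis `𝔹_II(3,3)` of the paper. -/
def BII33 : Fin 27 → V333 :=
  ![tp3 (e3 0) etaP xiP, tp3 (e3 0) etaP xiM, tp3 (e3 0) etaM xiP, tp3 (e3 0) etaM xiM,
    tp3 etaP (e3 2) xiP, tp3 etaP (e3 2) xiM, tp3 etaM (e3 2) xiP, tp3 etaM (e3 2) xiM,
    tp3 (e3 2) xiP etaP, tp3 (e3 2) xiP etaM, tp3 (e3 2) xiM etaP, tp3 (e3 2) xiM etaM,
    tp3 etaP xiP (e3 0), tp3 etaP xiM (e3 0), tp3 etaM xiP (e3 0), tp3 etaM xiM (e3 0),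
    tp3 xiP (e3 0) etaP, tp3 xiP (e3 0) etaM, tp3 xiM (e3 0) etaP, tp3 xiM (e3 0) etaM,
    tp3 xiP etaP (e3 2), tp3 xiP etaM (e3 2), tp3 xiM etaP (e3 2), tp3 xiM etaM (e3 2),
    tp3 (e3 0) (e3 0) (e3 0), tp3 (e3 1) (e3 1) (e3 1), tp3 (e3 2) (e3 2) (e3 2)]

/-! The inner product of product states factorizes slotwise. Each of {|0⟩, |1⟩, |2⟩},
{|η₊⟩, |η₋⟩, |2⟩} and {|0⟩, |ξ₊⟩, |ξ₋⟩} is orthonormal, and any two distinct states of the list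
have orthogonal factors in some slot, so the 27 states are orthonormal; 27 orthonormal vectors in
the 27-dimensional space `ℂ³ ⊗ ℂ³ ⊗ ℂ³` span it. -/

open scoped InnerProductSpace

lemma inner_tp3 (a b c a' b' c' : V3) :
    ⟪tp3 a b c, tp3 a' b' c'⟫_ℂ = ⟪a, a'⟫_ℂ * ⟪b, b'⟫_ℂ * ⟪c, c'⟫_ℂ := by
  simp only [tp3, PiLp.inner_apply, RCLike.inner_apply, Fintype.sum_prod_type]
  rw [mul_assoc, Finset.sum_mul_sum, Finset.sum_mul_sum]
  simp only [Finset.mul_sum, map_mul]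
  refine Finset.sum_congr rfl fun i _ => Finset.sum_congr rfl fun j _ =>
    Finset.sum_congr rfl fun k _ => by ring

lemma inner_e3_e3 (i j : Fin 3) : ⟪e3 i, e3 j⟫_ℂ = if i = j then 1 else 0 := by
  simp [e3, EuclideanSpace.inner_single_left, PiLp.single_apply]

lemma inner_s2_inv_smul (x y : V3) : ⟪s2⁻¹ • x, s2⁻¹ • y⟫_ℂ = 2⁻¹ * ⟪x, y⟫_ℂ := by
  have hs2 : (starRingEnd ℂ) s2⁻¹ * s2⁻¹ = 2⁻¹ := by
    rw [map_inv₀, s2, Complex.conj_ofReal, ← mul_inv, ← Complex.ofReal_mul,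
      Real.mul_self_sqrt zero_le_two]
    norm_num
  rw [inner_smul_left, inner_smul_right, ← mul_assoc, hs2]

@[simp] lemma inner_etaP_self : ⟪etaP, etaP⟫_ℂ = 1 := by
  simp only [etaP, inner_s2_inv_smul, inner_add_left, inner_add_right, inner_e3_e3]
  norm_num [Fin.ext_iff]

@[simp] lemma inner_etaM_self : ⟪etaM, etaM⟫_ℂ = 1 := by
  simp only [etaM, inner_s2_inv_smul, inner_sub_left, inner_sub_right, inner_e3_e3]
  norm_num [Fin.ext_iff]

@[simp] lemma inner_xiP_self : ⟪xiP, xiP⟫_ℂ = 1 := by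
  simp only [xiP, inner_s2_inv_smul, inner_add_left, inner_add_right, inner_e3_e3]
  norm_num [Fin.ext_iff]

@[simp] lemma inner_xiM_self : ⟪xiM, xiM⟫_ℂ = 1 := by
  simp only [xiM, inner_s2_inv_smul, inner_sub_left, inner_sub_right, inner_e3_e3]
  norm_num [Fin.ext_iff]

@[simp] lemma inner_etaP_etaM : ⟪etaP, etaM⟫_ℂ = 0 := by
  simp only [etaP, etaM, inner_s2_inv_smul, inner_add_left, inner_sub_right, inner_e3_e3]
  norm_num [Fin.ext_iff]

@[simp] lemma inner_xiP_xiM : ⟪xiP, xiM⟫_ℂ = 0 := by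
  simp only [xiP, xiM, inner_s2_inv_smul, inner_add_left, inner_sub_right, inner_e3_e3]
  norm_num [Fin.ext_iff]

@[simp] lemma inner_e3_two_etaP : ⟪e3 2, etaP⟫_ℂ = 0 := by
  simp only [etaP, inner_smul_right, inner_add_right, inner_e3_e3]
  norm_num [Fin.ext_iff]

@[simp] lemma inner_e3_two_etaM : ⟪e3 2, etaM⟫_ℂ = 0 := by
  simp only [etaM, inner_smul_right, inner_sub_right, inner_e3_e3]
  norm_num [Fin.ext_iff]

@[simp] lemma inner_e3_zero_xiP : ⟪e3 0, xiP⟫_ℂ = 0 := by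
  simp only [xiP, inner_smul_right, inner_add_right, inner_e3_e3]
  norm_num [Fin.ext_iff]

@[simp] lemma inner_e3_zero_xiM : ⟪e3 0, xiM⟫_ℂ = 0 := by
  simp only [xiM, inner_smul_right, inner_sub_right, inner_e3_e3]
  norm_num [Fin.ext_iff]

@[simp] lemma inner_etaM_etaP : ⟪etaM, etaP⟫_ℂ = 0 := inner_eq_zero_symm.mp inner_etaP_etaM
@[simp] lemma inner_xiM_xiP : ⟪xiM, xiP⟫_ℂ = 0 := inner_eq_zero_symm.mp inner_xiP_xiM
@[simp] lemma inner_etaP_e3_two : ⟪etaP, e3 2⟫_ℂ = 0 := inner_eq_zero_symm.mp inner_e3_two_etaP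
@[simp] lemma inner_etaM_e3_two : ⟪etaM, e3 2⟫_ℂ = 0 := inner_eq_zero_symm.mp inner_e3_two_etaM
@[simp] lemma inner_xiP_e3_zero : ⟪xiP, e3 0⟫_ℂ = 0 := inner_eq_zero_symm.mp inner_e3_zero_xiP
@[simp] lemma inner_xiM_e3_zero : ⟪xiM, e3 0⟫_ℂ = 0 := inner_eq_zero_symm.mp inner_e3_zero_xiM

lemma orthonormal_BII33 : Orthonormal ℂ BII33 := by
  rw [orthonormal_iff_ite]
  intro i j
  -- without the erasure, simp turns `⟪v, v⟫` into `‖v‖ ^ 2` before the `inner_*_self` lemmas fire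
  fin_cases i <;> fin_cases j <;>
    simp [BII33, inner_tp3, inner_e3_e3, -inner_self_eq_norm_sq_to_K]

/-- the 27 product states of `𝔹_II(3,3)` form an orthonormal basis of
`ℂ³ ⊗ ℂ³ ⊗ ℂ³`. -/
theorem BII33_orthonormal_basis :
    Orthonormal ℂ BII33 ∧ Submodule.span ℂ (Set.range BII33) = ⊤ :=
  ⟨orthonormal_BII33,
    orthonormal_BII33.linearIndependent.span_eq_top_of_card_eq_finrank (by simp)⟩
end
end

section
/- The eight three-qubit product states |0⟩|1⟩|0±1⟩, |1⟩|0±1⟩|0⟩, |0±1⟩|0⟩|1⟩, |0⟩|0⟩|0⟩, |1⟩|1⟩|1⟩ (where |0±1⟩ := (|0⟩±|1⟩)/√2) form an orthonormal basis of ℂ² ⊗ ℂ² ⊗ ℂ². -/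
noncomputable section

abbrev Q : Type := EuclideanSpace ℂ (Fin 2)
abbrev Q3 : Type := EuclideanSpace ℂ (Fin 2 × Fin 2 × Fin 2)

def e2 (i : Fin 2) : Q := EuclideanSpace.single i 1
def plus : Q := s2⁻¹ • (e2 0 + e2 1)
def minus : Q := s2⁻¹ • (e2 0 - e2 1)

/-- The tensor product `a ⊗ b ⊗ c ∈ (ℂ²)^⊗3`. -/
def tq3 (a b c : Q) : Q3 := WithLp.toLp 2 (fun p : Fin 2 × Fin 2 × Fin 2 => a p.1 * b p.2.1 * c p.2.2)

/-- The completed Shift product basis of `(ℂ²)^⊗3`. -/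
def shiftBasis : Fin 8 → Q3 :=
  ![tq3 (e2 0) (e2 1) plus, tq3 (e2 0) (e2 1) minus,
    tq3 (e2 1) plus (e2 0), tq3 (e2 1) minus (e2 0),
    tq3 plus (e2 0) (e2 1), tq3 minus (e2 0) (e2 1),
    tq3 (e2 0) (e2 0) (e2 0), tq3 (e2 1) (e2 1) (e2 1)]

/-!
Inner products of product states factor: `⟪a ⊗ b ⊗ c, a' ⊗ b' ⊗ c'⟫ = ⟪a, a'⟫ ⟪b, b'⟫ ⟪c, c'⟫`.
Each listed state is a product of vectors from the orthonormal pairs `{|0⟩, |1⟩}` and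
`{|0+1⟩, |0-1⟩}`, so every state has norm one, and any two distinct states contain, in some
tensor factor, two different vectors of the same pair, which makes their inner product vanish.
Eight orthonormal vectors in the eight-dimensional space `ℂ² ⊗ ℂ² ⊗ ℂ²` span it.
-/

open scoped InnerProductSpace

lemma orthonormal_hadamard {𝕜 E : Type*} [RCLike 𝕜] [NormedAddCommGroup E] [InnerProductSpace 𝕜 E]
    {u v : E} (hu : ‖u‖ = 1) (hv : ‖v‖ = 1) (huv : ⟪u, v⟫_𝕜 = 0) :
    Orthonormal 𝕜 ![((√2 : ℝ) : 𝕜)⁻¹ • (u + v), ((√2 : ℝ) : 𝕜)⁻¹ • (u - v)] := by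
  have hvu : ⟪v, u⟫_𝕜 = 0 := inner_eq_zero_symm.mp huv
  have hsq : 2 * (((√2 : ℝ) : 𝕜)⁻¹ * ((√2 : ℝ) : 𝕜)⁻¹) = 1 := by
    rw [← mul_inv, ← RCLike.ofReal_mul, Real.mul_self_sqrt zero_le_two, RCLike.ofReal_ofNat,
      mul_inv_cancel₀ two_ne_zero]
  simp only [orthonormal_iff_ite, Fin.forall_fin_two, Matrix.cons_val_zero, Matrix.cons_val_one,
    inner_smul_left, inner_smul_right, inner_add_left, inner_add_right, inner_sub_left,
    inner_sub_right, inner_self_eq_one_of_norm_eq_one hu, inner_self_eq_one_of_norm_eq_one hv,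
    huv, hvu, map_inv₀, RCLike.conj_ofReal, if_pos, zero_ne_one, one_ne_zero, if_false]
  exact ⟨⟨by linear_combination hsq, by ring⟩, by ring, by linear_combination hsq⟩

lemma orthonormal_plus_minus : Orthonormal ℂ ![plus, minus] :=
  have he := EuclideanSpace.orthonormal_single (𝕜 := ℂ) (ι := Fin 2)
  orthonormal_hadamard (he.1 0) (he.1 1) (he.2 zero_ne_one)

lemma inner_e2 (i j : Fin 2) : ⟪e2 i, e2 j⟫_ℂ = if i = j then 1 else 0 :=
  orthonormal_iff_ite.mp EuclideanSpace.orthonormal_single i j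

lemma inner_plus_self : ⟪plus, plus⟫_ℂ = 1 :=
  inner_self_eq_one_of_norm_eq_one (orthonormal_plus_minus.1 0)

lemma inner_minus_self : ⟪minus, minus⟫_ℂ = 1 :=
  inner_self_eq_one_of_norm_eq_one (orthonormal_plus_minus.1 1)

lemma inner_plus_minus : ⟪plus, minus⟫_ℂ = 0 := orthonormal_plus_minus.2 zero_ne_one

lemma inner_minus_plus : ⟪minus, plus⟫_ℂ = 0 := orthonormal_plus_minus.2 one_ne_zero

lemma inner_tq3 (a b c a' b' c' : Q) :
    ⟪tq3 a b c, tq3 a' b' c'⟫_ℂ = ⟪a, a'⟫_ℂ * ⟪b, b'⟫_ℂ * ⟪c, c'⟫_ℂ := by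
  simp only [PiLp.inner_apply, RCLike.inner_apply, tq3, Fintype.sum_prod_type, Fin.sum_univ_two,
    map_mul]
  ring

lemma orthonormal_shiftBasis : Orthonormal ℂ shiftBasis := by
  rw [orthonormal_iff_ite]
  intro i j
  fin_cases i <;> fin_cases j <;>
    simp [-inner_self_eq_norm_sq_to_K, shiftBasis, inner_tq3, inner_e2, inner_plus_self,
      inner_minus_self, inner_plus_minus, inner_minus_plus]

/-- the eight listed three-qubit product states form an orthonormal basis
of `ℂ² ⊗ ℂ² ⊗ ℂ²`. -/
theorem shiftBasis_orthonormal_basis :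
    Orthonormal ℂ shiftBasis ∧ Submodule.span ℂ (Set.range shiftBasis) = ⊤ := by
  have hcard : Fintype.card (Fin 8) = Module.finrank ℂ Q3 := by
    simp [finrank_euclideanSpace]
  exact ⟨orthonormal_shiftBasis,
    orthonormal_shiftBasis.linearIndependent.span_eq_top_of_card_eq_finrank hcard⟩
end
end

section
/- If a positive semidefinite operator E on ℂ³ satisfies ⟨β_i| (E ⊗ I₃) |β_j⟩ = 0 for all i ≠ j, where {|β_j⟩} is the nine-state Bennett basis of ℂ³ ⊗ ℂ³ and E acts on the first factor, then E is proportional to the identity operator on ℂ³. -/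
noncomputable section
open Kronecker ComplexOrder

abbrev V33 : Type := EuclideanSpace ℂ (Fin 3 × Fin 3)

def tp2 (a b : V3) : V33 := WithLp.toLp 2 (fun p => a p.1 * b p.2)

/-- The nine-state Bennett product basis of `ℂ³ ⊗ ℂ³`. -/
def bennett : Fin 9 → V33 :=
  ![tp2 (e3 0) etaP, tp2 (e3 0) etaM, tp2 etaP (e3 2), tp2 etaM (e3 2),
    tp2 (e3 2) xiP, tp2 (e3 2) xiM, tp2 xiP (e3 0), tp2 xiM (e3 0),
    tp2 (e3 1) (e3 1)]

/-! `E ⊗ I` acts factorwise on product states, so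
`⟨a ⊗ b, (E ⊗ I)(c ⊗ d)⟩ = ⟨a, E c⟩ ⟨b, d⟩`, and every pair of Bennett states whose second
factors are not orthogonal forces `⟨a, E c⟩ = 0`. With first factors among `|0⟩, |1⟩, |2⟩` this
kills the six off-diagonal entries of `E`; the pairs `η₊, η₋` and `ξ₊, ξ₋`, which share their
second factor, give `E₀₀ = E₁₁` and `E₁₁ = E₂₂`. -/

open scoped Matrix

theorem Matrix.kronecker_one_mulVec_tensor {R m n : Type*} [CommSemiring R] [Fintype m]
    [Fintype n] [DecidableEq n] (A : Matrix m m R) (c : m → R) (d : n → R) :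
    (A ⊗ₖ (1 : Matrix n n R)) *ᵥ (fun p => c p.1 * d p.2) = fun p => (A *ᵥ c) p.1 * d p.2 := by
  ext ⟨i, j⟩
  simp [Matrix.mulVec, dotProduct, Fintype.sum_prod_type, Matrix.one_apply, Finset.sum_mul,
    mul_assoc]

theorem EuclideanSpace.inner_tensor_tensor {𝕜 m n : Type*} [RCLike 𝕜] [Fintype m] [Fintype n]
    (a c : EuclideanSpace 𝕜 m) (b d : EuclideanSpace 𝕜 n) :
    inner 𝕜 (WithLp.toLp 2 (fun p : m × n => a p.1 * b p.2))
      (WithLp.toLp 2 (fun p : m × n => c p.1 * d p.2)) = inner 𝕜 a c * inner 𝕜 b d := by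
  simp only [PiLp.inner_apply, RCLike.inner_apply, Fintype.sum_prod_type, Finset.sum_mul_sum,
    map_mul]
  refine Finset.sum_congr rfl fun i _ => Finset.sum_congr rfl fun j _ => ?_
  ring

theorem inner_tp2_kronecker_one (E : Matrix (Fin 3) (Fin 3) ℂ) (a b c d : V3) :
    inner ℂ (tp2 a b) (Matrix.toEuclideanLin (E ⊗ₖ (1 : Matrix (Fin 3) (Fin 3) ℂ)) (tp2 c d))
      = inner ℂ a (Matrix.toEuclideanLin E c) * inner ℂ b d := by
  rw [← EuclideanSpace.inner_tensor_tensor]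
  exact congrArg _ (congrArg _ (Matrix.kronecker_one_mulVec_tensor E c d))

theorem inner_e3_toEuclideanLin (E : Matrix (Fin 3) (Fin 3) ℂ) (i j : Fin 3) :
    inner ℂ (e3 i) (Matrix.toEuclideanLin E (e3 j)) = E i j := by
  simp [e3, EuclideanSpace.inner_single_left, Matrix.toEuclideanLin]

theorem inner_smul_add_map_smul_sub {𝕜 F : Type*} [RCLike 𝕜] [SeminormedAddCommGroup F]
    [InnerProductSpace 𝕜 F] (T : F →ₗ[𝕜] F) (s : 𝕜) (u v : F) :
    inner 𝕜 (s • (u + v)) (T (s • (u - v)))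
      = starRingEnd 𝕜 s * s * (inner 𝕜 u (T u) - inner 𝕜 u (T v) + inner 𝕜 v (T u)
        - inner 𝕜 v (T v)) := by
  simp only [map_smul, map_sub, inner_smul_left, inner_smul_right, inner_add_left, inner_sub_right]
  ring

theorem s2_ne_zero : s2 ≠ 0 := by
  simp [s2]

theorem star_s2_inv_mul_s2_inv : starRingEnd ℂ s2⁻¹ * s2⁻¹ = 2⁻¹ := by
  rw [map_inv₀, s2, Complex.conj_ofReal, ← mul_inv, ← Complex.ofReal_mul,
    Real.mul_self_sqrt zero_le_two, Complex.ofReal_ofNat]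

theorem inner_e3_one_etaP : inner ℂ (e3 1) etaP = s2⁻¹ := by
  simp [e3, etaP, EuclideanSpace.inner_single_left]

theorem inner_e3_one_xiP : inner ℂ (e3 1) xiP = s2⁻¹ := by
  simp [e3, xiP, EuclideanSpace.inner_single_left]

theorem inner_xiP_etaP : inner ℂ xiP etaP = 2⁻¹ := by
  simp only [xiP, etaP, inner_smul_left, inner_smul_right, inner_add_left, inner_add_right]
  simp [e3, EuclideanSpace.inner_single_left, ← star_s2_inv_mul_s2_inv, mul_comm]

theorem inner_e3_self (i : Fin 3) : inner ℂ (e3 i) (e3 i) = 1 := by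
  simp [e3]

theorem inner_toEuclideanLin_eq_zero_of_inner_tp2 {E : Matrix (Fin 3) (Fin 3) ℂ} {a b c d : V3}
    (h : inner ℂ (tp2 a b)
      (Matrix.toEuclideanLin (E ⊗ₖ (1 : Matrix (Fin 3) (Fin 3) ℂ)) (tp2 c d)) = 0)
    (hbd : inner ℂ b d ≠ 0) : inner ℂ a (Matrix.toEuclideanLin E c) = 0 := by
  rw [inner_tp2_kronecker_one] at h
  exact (mul_eq_zero.1 h).resolve_right hbd

theorem bennett_OPM_trivial_general (E : Matrix (Fin 3) (Fin 3) ℂ)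
    (h : ∀ i j : Fin 9, i ≠ j →
      (inner ℂ (bennett i)
        (Matrix.toEuclideanLin (E ⊗ₖ (1 : Matrix (Fin 3) (Fin 3) ℂ)) (bennett j)) : ℂ) = 0) :
    ∃ c : ℂ, E = c • (1 : Matrix (Fin 3) (Fin 3) ℂ) := by
  have vanish {i j : Fin 9} (hij : i ≠ j) {a b c d : V3} (hi : bennett i = tp2 a b)
      (hj : bennett j = tp2 c d) (hbd : inner ℂ b d ≠ 0) :
      inner ℂ a (Matrix.toEuclideanLin E c) = 0 :=
    inner_toEuclideanLin_eq_zero_of_inner_tp2 (hi ▸ hj ▸ h i j hij) hbd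
  have e1_eta : inner ℂ (e3 1) etaP ≠ 0 := by simp [inner_e3_one_etaP, s2_ne_zero]
  have e1_xi : inner ℂ (e3 1) xiP ≠ 0 := by simp [inner_e3_one_xiP, s2_ne_zero]
  have xi_eta : inner ℂ xiP etaP ≠ 0 := by simp [inner_xiP_etaP]
  have e_self (k : Fin 3) : inner ℂ (e3 k) (e3 k) ≠ 0 := by rw [inner_e3_self]; exact one_ne_zero
  have h10 := vanish (i := 8) (j := 0) (by decide) rfl rfl e1_eta
  have h01 := vanish (i := 0) (j := 8) (by decide) rfl rfl (inner_eq_zero_symm.not.1 e1_eta)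
  have h12 := vanish (i := 8) (j := 4) (by decide) rfl rfl e1_xi
  have h21 := vanish (i := 4) (j := 8) (by decide) rfl rfl (inner_eq_zero_symm.not.1 e1_xi)
  have h20 := vanish (i := 4) (j := 0) (by decide) rfl rfl xi_eta
  have h02 := vanish (i := 0) (j := 4) (by decide) rfl rfl (inner_eq_zero_symm.not.1 xi_eta)
  have h_eta := vanish (i := 2) (j := 3) (by decide) rfl rfl (e_self 2)
  have h_xi := vanish (i := 6) (j := 7) (by decide) rfl rfl (e_self 0)
  rw [etaP, etaM, inner_smul_add_map_smul_sub] at h_eta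
  rw [xiP, xiM, inner_smul_add_map_smul_sub] at h_xi
  simp only [inner_e3_toEuclideanLin, star_s2_inv_mul_s2_inv] at h10 h01 h12 h21 h20 h02 h_eta h_xi
  have h11 : E 1 1 = E 0 0 := by linear_combination (-2) * h_eta - h01 + h10
  have h22 : E 2 2 = E 0 0 := by linear_combination (-2) * h_xi - h12 + h21 + h11
  refine ⟨E 0 0, ?_⟩
  ext i j
  fin_cases i <;> fin_cases j <;> simp [h10, h01, h12, h21, h20, h02, h11, h22]

/-- a positive semidefinite operator `E` on `ℂ³` acting on the first factor
that preserves the orthogonality of the Bennett basis is proportional to the identity. -/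
theorem bennett_OPM_trivial (E : Matrix (Fin 3) (Fin 3) ℂ) (hE : E.PosSemidef)
    (h : ∀ i j : Fin 9, i ≠ j →
      (inner ℂ (bennett i)
        (Matrix.toEuclideanLin (E ⊗ₖ (1 : Matrix (Fin 3) (Fin 3) ℂ)) (bennett j)) : ℂ) = 0) :
    ∃ c : ℂ, E = c • (1 : Matrix (Fin 3) (Fin 3) ℂ) :=
  bennett_OPM_trivial_general E h
end
end
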